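/- Let f be a Fibonacci map. Let S = S_{k_1}+S_{k_2}+⋯+S_{k_{i_0}} be a Fibonacci sum expression (so k_{i+1} ≥ k_i+2), and let j, j′ satisfy k_{i_0}+2 ≤ j < j′. Then: if i_0 is odd, |c_{S+S_j}| < |c_{S+S_{j′}}| < |c_S|; and if i_0 is even, |c_{S+S_j}| > |c_{S+S_{j′}}| > |c_S|. -/

import Mathlib

noncomputable section

/-- The Fibonacci numbers `S 0 = 1`, `S 1 = 2`, `S (k+2) = S (k+1) + S k`. -/
def fibS : ℕ → ℕ
  | 0 => 1
  | 1 => 2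
  | n + 2 => fibS (n + 1) + fibS n

/-- `f : [0,1] → [0,1]` is unimodal with critical point `c`: continuous, maps `[0,1]` into
itself, `f 0 = f 1 = 0`, `c ∈ (0,1)`, strictly increasing on `[0,c]`, strictly decreasing
on `[c,1]`. -/
def IsUnimodal (f : ℝ → ℝ) (c : ℝ) : Prop :=
  ContinuousOn f (Set.Icc 0 1) ∧ Set.MapsTo f (Set.Icc 0 1) (Set.Icc 0 1) ∧
  f 0 = 0 ∧ f 1 = 0 ∧ c ∈ Set.Ioo (0 : ℝ) 1 ∧
  StrictMonoOn f (Set.Icc 0 c) ∧ StrictAntiOn f (Set.Icc c 1)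

/-- `f` is symmetric about `c`: `f (2c - x) = f x` whenever both points lie in `[0,1]`
(the symmetric point of `x` is `x̂ = 2c - x`). -/
def SymmetricAbout (f : ℝ → ℝ) (c : ℝ) : Prop :=
  ∀ x ∈ Set.Icc (0 : ℝ) 1, 2 * c - x ∈ Set.Icc (0 : ℝ) 1 → f (2 * c - x) = f x

/-- The distance from `c` to a nearest `k`-th preimage `c₋ₖ` of `c` in `[0,1]`,
i.e. `|c₋ₖ - c| = |c₋ₖ|`. -/
def preimDist (f : ℝ → ℝ) (c : ℝ) (k : ℕ) : ℝ :=
  sInf ((fun x => |x - c|) '' {x | x ∈ Set.Icc (0 : ℝ) 1 ∧ f^[k] x = c})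

/-- `S` is the sequence of cutting times of `f`: `S 0 = 1`, and `S (i+1)` is the least
`k ≥ S i` for which the nearest `k`-th preimage `c₋ₖ` of `c` lies in the symmetric open
interval `(c₋ₛᵢ, (c₋ₛᵢ)^)`, i.e. `c₋ₖ` exists and is strictly closer to `c` than `c₋ₛᵢ`. -/
def IsCuttingSeq (f : ℝ → ℝ) (c : ℝ) (S : ℕ → ℕ) : Prop :=
  S 0 = 1 ∧ ∀ i, IsLeast {k | S i ≤ k ∧
    ({x | x ∈ Set.Icc (0 : ℝ) 1 ∧ f^[k] x = c}).Nonempty ∧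
    preimDist f c k < preimDist f c (S i)} (S (i + 1))

/-- A Fibonacci map: a symmetric unimodal map whose cutting times are exactly the
Fibonacci numbers `1, 2, 3, 5, 8, …`. -/
def IsFibonacciMap (f : ℝ → ℝ) (c : ℝ) : Prop :=
  IsUnimodal f c ∧ SymmetricAbout f c ∧ IsCuttingSeq f c fibS

/-- `l` is the Fibonacci sum expression of `m`: a nonempty list of indices
`k₁, k₂, …` with `k_{i+1} ≥ k_i + 2` for each `i`, with `S_{k₁} + S_{k₂} + ⋯ = m`.
The leading summand is `fibS n` where `l.head? = some n`. -/
def IsFibExpansion (l : List ℕ) (m : ℕ) : Prop :=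
  l ≠ [] ∧ l.Chain' (fun a b => a + 2 ≤ b) ∧ (l.map fibS).sum = m

/-!
Write `orbitDist n = |c_n|` and `Dₖ = |c₋ₛₖ|`. Since no point of the open `Dₖ`-neighbourhood of `c`
reaches `c` in fewer than `S k` steps, `f^[S k]` is monotone on `[c, c + Dₖ]` and sends `c + Dₖ`
to `c`, so `x ↦ |f^[S k] x - c|` is strictly decreasing there. By symmetry
`|c_{S k + T}| = |f^[S k] (c + |c_T|) - c|`, hence prepending a summand `S k` to a Fibonacci sum
reverses the order of the distances `|c_T|`, provided they are at most `Dₖ`. The Fibonacci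
recursion gives `|c_{S (i+2)}| < Dᵢ < |c_{S (i+1)}|`: this makes `|c_{S j}|` decreasing, which is
the case of the empty sum, and keeps every partial sum inside the window of the next summand.
-/

open Set

lemma fibS_pos : ∀ n, 0 < fibS n
  | 0 | 1 => by decide
  | n + 2 => Nat.add_pos_left (fibS_pos (n + 1)) _

lemma fibS_strictMono : StrictMono fibS :=
  strictMono_nat_of_lt_succ fun
    | 0 => by decide
    | n + 1 => Nat.lt_add_of_pos_right (fibS_pos n)

def orbitDist (f : ℝ → ℝ) (c : ℝ) (n : ℕ) : ℝ := |f^[n] c - c|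

def critPreimages (f : ℝ → ℝ) (c : ℝ) (n : ℕ) : Set ℝ := {x | x ∈ Icc (0 : ℝ) 1 ∧ f^[n] x = c}

lemma strictMonoOn_or_strictAntiOn_comp {α β γ : Type*} [Preorder α] [Preorder β] [Preorder γ]
    {g : α → β} {h : β → γ} {s : Set α} {t : Set β}
    (hh : StrictMonoOn h t ∨ StrictAntiOn h t) (hg : StrictMonoOn g s ∨ StrictAntiOn g s)
    (hst : MapsTo g s t) : StrictMonoOn (h ∘ g) s ∨ StrictAntiOn (h ∘ g) s := by
  rcases hh with hh | hh <;> rcases hg with hg | hg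
  · exact .inl (hh.comp hg hst)
  · exact .inr (hh.comp_strictAntiOn hg hst)
  · exact .inr (hh.comp_strictMonoOn hg hst)
  · exact .inl (hh.comp hg hst)

lemma mapsTo_uIcc_of_strictMonoOn_or_strictAntiOn {α β : Type*} [LinearOrder α] [LinearOrder β]
    {g : α → β} {u v : α} (huv : u ≤ v)
    (hg : StrictMonoOn g (Icc u v) ∨ StrictAntiOn g (Icc u v)) :
    MapsTo g (Icc u v) (uIcc (g u) (g v)) := by
  rw [← uIcc_of_le huv] at hg ⊢
  exact hg.elim (·.monotoneOn.mapsTo_uIcc) (·.antitoneOn.mapsTo_uIcc)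

lemma intermediate_value_uIoo {g : ℝ → ℝ} {u v : ℝ} (huv : u ≤ v)
    (hg : ContinuousOn g (Icc u v)) : uIoo (g u) (g v) ⊆ g '' Ioo u v := by
  rcases le_total (g u) (g v) with h | h
  · rw [uIoo_of_le h]; exact intermediate_value_Ioo huv hg
  · rw [uIoo_of_ge h]; exact intermediate_value_Ioo' huv hg

lemma strictAntiOn_abs_sub_of_eq {φ : ℝ → ℝ} {a b y : ℝ}
    (hφ : StrictMonoOn φ (Icc a b) ∨ StrictAntiOn φ (Icc a b)) (hb : φ b = y) :
    StrictAntiOn (fun x => |φ x - y|) (Icc a b) := by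
  intro x hx x' hx' hxx'
  have hbmem : b ∈ Icc a b := ⟨hx.1.trans hx.2, le_rfl⟩
  rcases hφ with hφ | hφ
  · have h₁ := hφ hx hx' hxx'
    have h₂ : φ x' ≤ y := hb ▸ hφ.monotoneOn hx' hbmem hx'.2
    simp only [abs_of_nonpos (by linarith : φ x - y ≤ 0), abs_of_nonpos (by linarith : φ x' - y ≤ 0)]
    linarith
  · have h₁ := hφ hx hx' hxx'
    have h₂ : y ≤ φ x' := hb ▸ hφ.antitoneOn hx' hbmem hx'.2
    simp only [abs_of_nonneg (by linarith : 0 ≤ φ x - y), abs_of_nonneg (by linarith : 0 ≤ φ x' - y)]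
    linarith

lemma preimDist_nonneg (f : ℝ → ℝ) (c : ℝ) (n : ℕ) : 0 ≤ preimDist f c n :=
  Real.sInf_nonneg (by rintro _ ⟨x, -, rfl⟩; exact abs_nonneg _)

lemma preimDist_le {f : ℝ → ℝ} {c x : ℝ} {n : ℕ} (hx : x ∈ critPreimages f c n) :
    preimDist f c n ≤ |x - c| :=
  csInf_le ⟨0, by rintro _ ⟨y, -, rfl⟩; exact abs_nonneg _⟩ ⟨x, hx, rfl⟩

lemma orbitDist_nonneg (f : ℝ → ℝ) (c : ℝ) (n : ℕ) : 0 ≤ orbitDist f c n := abs_nonneg _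

lemma c_add_orbitDist_mem_Icc {f : ℝ → ℝ} {c D : ℝ} {n : ℕ} (h : orbitDist f c n ≤ D) :
    c + orbitDist f c n ∈ Icc c (c + D) :=
  ⟨le_add_of_nonneg_right (orbitDist_nonneg f c n), add_le_add_right h c⟩

namespace IsUnimodal

variable {f : ℝ → ℝ} {c : ℝ}

lemma c_mem_Icc (hu : IsUnimodal f c) : c ∈ Icc (0 : ℝ) 1 :=
  Ioo_subset_Icc_self hu.2.2.2.2.1

lemma mapsTo_iterate (hu : IsUnimodal f c) (n : ℕ) : MapsTo f^[n] (Icc 0 1) (Icc 0 1) :=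
  hu.2.1.iterate n

lemma continuousOn_iterate (hu : IsUnimodal f c) (n : ℕ) : ContinuousOn f^[n] (Icc 0 1) := by
  induction n with
  | zero => exact continuousOn_id
  | succ n ih =>
    rw [Function.iterate_succ']
    exact hu.1.comp ih (hu.mapsTo_iterate n)

lemma strictMonoOn_or_strictAntiOn (hu : IsUnimodal f c) {u v : ℝ} (hu0 : 0 ≤ u) (hv1 : v ≤ 1)
    (hc : c ∉ Ioo u v) : StrictMonoOn f (Icc u v) ∨ StrictAntiOn f (Icc u v) := by
  by_cases hvc : v ≤ c
  · exact .inl (hu.2.2.2.2.2.1.mono (Icc_subset_Icc hu0 hvc))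
  · have hcu : c ≤ u := by_contra fun h => hc ⟨not_le.mp h, not_le.mp hvc⟩
    exact .inr (hu.2.2.2.2.2.2.mono (Icc_subset_Icc hcu hv1))

lemma strictMonoOn_or_strictAntiOn_iterate (hu : IsUnimodal f c) (n : ℕ) {u v : ℝ}
    (huv : u ≤ v) (hu0 : 0 ≤ u) (hv1 : v ≤ 1) (hfree : ∀ m < n, ∀ x ∈ Ioo u v, f^[m] x ≠ c) :
    StrictMonoOn f^[n] (Icc u v) ∨ StrictAntiOn f^[n] (Icc u v) := by
  induction n generalizing u v with
  | zero => exact .inl strictMonoOn_id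
  | succ n ih =>
    have hsub : Icc u v ⊆ Icc 0 1 := Icc_subset_Icc hu0 hv1
    have hf : StrictMonoOn f (Icc u v) ∨ StrictAntiOn f (Icc u v) :=
      hu.strictMonoOn_or_strictAntiOn hu0 hv1 fun hc => hfree 0 n.succ_pos c hc rfl
    have himage := mapsTo_uIcc_of_strictMonoOn_or_strictAntiOn huv hf
    have hends : uIcc (f u) (f v) ⊆ Icc 0 1 :=
      uIcc_subset_Icc (hu.2.1 (hsub ⟨le_rfl, huv⟩)) (hu.2.1 (hsub ⟨huv, le_rfl⟩))
    have hfree' : ∀ m < n, ∀ y ∈ uIoo (f u) (f v), f^[m] y ≠ c := by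
      intro m hm y hy
      obtain ⟨x, hx, rfl⟩ := intermediate_value_uIoo huv (hu.1.mono hsub) hy
      simpa using hfree (m + 1) (by omega) x hx
    rw [Function.iterate_succ]
    exact strictMonoOn_or_strictAntiOn_comp
      (ih inf_le_sup (hends ⟨le_rfl, inf_le_sup⟩).1 (hends ⟨inf_le_sup, le_rfl⟩).2 hfree') hf himage

lemma c_eq_half (hu : IsUnimodal f c) (hs : SymmetricAbout f c) : c = 1 / 2 := by
  obtain ⟨-, -, hf0, hf1, ⟨hc0, hc1⟩, hmono, hanti⟩ := hu
  by_contra hne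
  rcases lt_or_gt_of_ne hne with hlt | hgt
  · have hsym := hs 0 ⟨le_rfl, zero_le_one⟩ ⟨by linarith, by linarith⟩
    have := hanti ⟨by linarith, by linarith⟩ ⟨hc1.le, le_rfl⟩ (by linarith : 2 * c - 0 < 1)
    linarith
  · have hsym := hs 1 ⟨zero_le_one, le_rfl⟩ ⟨by linarith, by linarith⟩
    have := hmono ⟨le_rfl, hc0.le⟩ ⟨by linarith, by linarith⟩ (by linarith : (0 : ℝ) < 2 * c - 1)
    linarith

lemma c_add_abs_sub_mem (hu : IsUnimodal f c) (hs : SymmetricAbout f c) {y : ℝ}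
    (hy : y ∈ Icc (0 : ℝ) 1) : c + |y - c| ∈ Icc (0 : ℝ) 1 := by
  have := hu.c_eq_half hs
  constructor <;> cases abs_cases (y - c) <;> linarith [hy.1, hy.2]

/-- `c + |y - c|` is `y` or its mirror image `ŷ = 2c - y`, which have the same image under `f`. -/
lemma iterate_c_add_abs_sub (hu : IsUnimodal f c) (hs : SymmetricAbout f c) {n : ℕ} (hn : 1 ≤ n)
    {y : ℝ} (hy : y ∈ Icc (0 : ℝ) 1) : f^[n] (c + |y - c|) = f^[n] y := by
  obtain ⟨m, rfl⟩ := Nat.exists_eq_add_of_le' hn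
  rw [Function.iterate_succ_apply, Function.iterate_succ_apply]
  rcases abs_cases (y - c) with ⟨h, -⟩ | ⟨h, -⟩
  · rw [h, add_sub_cancel]
  · rw [h, show c + -(y - c) = 2 * c - y by ring]
    have := hu.c_eq_half hs
    rw [hs y hy ⟨by linarith [hy.2], by linarith [hy.1]⟩]

lemma orbitDist_add (hu : IsUnimodal f c) (hs : SymmetricAbout f c) {n : ℕ} (hn : 1 ≤ n)
    (T : ℕ) : orbitDist f c (n + T) = |f^[n] (c + orbitDist f c T) - c| := by
  rw [orbitDist, orbitDist, iterate_c_add_abs_sub hu hs hn (hu.mapsTo_iterate T hu.c_mem_Icc),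
    Function.iterate_add_apply]

lemma apply_le_apply_c (hu : IsUnimodal f c) {x : ℝ} (hx : x ∈ Icc (0 : ℝ) 1) : f x ≤ f c := by
  obtain ⟨-, -, -, -, ⟨hc0, hc1⟩, hmono, hanti⟩ := hu
  rcases le_total x c with h | h
  · exact hmono.monotoneOn ⟨hx.1, h⟩ ⟨hc0.le, le_rfl⟩ h
  · exact hanti.antitoneOn ⟨le_rfl, hc1.le⟩ ⟨h, hx.2⟩ h

lemma isCompact_critPreimages (hu : IsUnimodal f c) (n : ℕ) : IsCompact (critPreimages f c n) :=
  isCompact_Icc.of_isClosed_subset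
    ((hu.continuousOn_iterate n).preimage_isClosed_of_isClosed isClosed_Icc isClosed_singleton)
    fun _ hx => hx.1

lemma c_add_preimDist_mem (hu : IsUnimodal f c) (hs : SymmetricAbout f c) {n : ℕ} (hn : 1 ≤ n)
    (hne : (critPreimages f c n).Nonempty) : c + preimDist f c n ∈ critPreimages f c n := by
  have hcont : ContinuousOn (fun x => |x - c|) (critPreimages f c n) := by fun_prop
  obtain ⟨z, hz, hzd⟩ :=
    ((hu.isCompact_critPreimages n).image_of_continuousOn hcont).sInf_mem (hne.image _)
  rw [preimDist, ← critPreimages, ← hzd]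
  exact ⟨hu.c_add_abs_sub_mem hs hz.1, (hu.iterate_c_add_abs_sub hs hn hz.1).trans hz.2⟩

end IsUnimodal

namespace IsCuttingSeq

variable {f : ℝ → ℝ} {c : ℝ} {S : ℕ → ℕ}

lemma preimDist_succ_lt (hS : IsCuttingSeq f c S) (i : ℕ) :
    preimDist f c (S (i + 1)) < preimDist f c (S i) :=
  (hS.2 i).1.2.2

lemma strictAnti_preimDist (hS : IsCuttingSeq f c S) : StrictAnti fun i => preimDist f c (S i) :=
  strictAnti_nat_of_succ_lt hS.preimDist_succ_lt

lemma preimDist_pos (hS : IsCuttingSeq f c S) (i : ℕ) : 0 < preimDist f c (S i) :=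
  (preimDist_nonneg f c _).trans_lt (hS.preimDist_succ_lt i)

lemma succ_le_of_preimDist_lt (hS : IsCuttingSeq f c S) {i n : ℕ} (hn : S i ≤ n)
    (hne : (critPreimages f c n).Nonempty) (hd : preimDist f c n < preimDist f c (S i)) :
    S (i + 1) ≤ n :=
  (hS.2 i).2 ⟨hn, hne, hd⟩

lemma one_le (hS : IsCuttingSeq f c S) (k : ℕ) : 1 ≤ S k := by
  induction k with
  | zero => exact hS.1.ge
  | succ k ih => exact ih.trans (hS.2 k).1.1

lemma c_lt_apply_c (hu : IsUnimodal f c) (hS : IsCuttingSeq f c S) : c < f c := by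
  have hpos : 0 < preimDist f c 1 := hS.1 ▸ hS.preimDist_pos 0
  by_contra! hle
  rcases (critPreimages f c 1).eq_empty_or_nonempty with hemp | ⟨x, hx, hfx⟩
  · rw [preimDist, ← critPreimages, hemp, image_empty, Real.sInf_empty] at hpos
    exact hpos.false
  · have hfix : f c = c := le_antisymm hle (hfx ▸ hu.apply_le_apply_c hx)
    have := preimDist_le (n := 1) ⟨hu.c_mem_Icc, hfix⟩
    rw [sub_self, abs_zero] at this
    linarith

/-- `f` maps `[0, c]` onto `[0, f c] ⊇ [0, c]`, so `c` has preimages of every order in `[0, c]`. -/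
lemma critPreimages_nonempty (hu : IsUnimodal f c) (hS : IsCuttingSeq f c S) (n : ℕ) :
    (critPreimages f c n).Nonempty := by
  have hc := hu.c_mem_Icc
  have hsurj : SurjOn f (Icc 0 c) (Icc 0 c) := by
    refine Subset.trans ?_ (intermediate_value_Icc hc.1 (hu.1.mono (Icc_subset_Icc_right hc.2)))
    rw [hu.2.2.1]
    exact Icc_subset_Icc_right (c_lt_apply_c hu hS).le
  obtain ⟨x, hx, hfx⟩ := hsurj.iterate n ⟨hc.1, le_rfl⟩
  exact ⟨x, Icc_subset_Icc_right hc.2 hx, hfx⟩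

lemma preimDist_le_preimDist (hu : IsUnimodal f c) (hS : IsCuttingSeq f c S) {k m : ℕ}
    (hm : 1 ≤ m) (hmk : m ≤ S k) : preimDist f c (S k) ≤ preimDist f c m := by
  induction k with
  | zero => rw [show m = S 0 by rw [hS.1]; exact le_antisymm (hS.1 ▸ hmk) hm]
  | succ k ih =>
    by_contra! hlt
    rcases le_total m (S k) with hmk' | hkm
    · linarith [ih hmk', hS.preimDist_succ_lt k]
    · have := hS.succ_le_of_preimDist_lt hkm (critPreimages_nonempty hu hS m)
        (hlt.trans (hS.preimDist_succ_lt k))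
      rw [le_antisymm hmk this] at hlt
      exact hlt.false

lemma strictMonoOn_or_strictAntiOn_iterate_Icc (hu : IsUnimodal f c) (hs : SymmetricAbout f c)
    (hS : IsCuttingSeq f c S) (k : ℕ) :
    StrictMonoOn f^[S k] (Icc c (c + preimDist f c (S k))) ∨
      StrictAntiOn f^[S k] (Icc c (c + preimDist f c (S k))) := by
  have hmem := hu.c_add_preimDist_mem hs (hS.one_le k) (critPreimages_nonempty hu hS _)
  refine hu.strictMonoOn_or_strictAntiOn_iterate _ (by linarith [hS.preimDist_pos k])
    hu.c_mem_Icc.1 hmem.1.2 fun m hm x hx hfx => ?_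
  rcases Nat.eq_zero_or_pos m with rfl | hm1
  · exact hx.1.ne' hfx
  · have h₁ := preimDist_le ⟨⟨hu.c_mem_Icc.1.trans hx.1.le, hx.2.le.trans hmem.1.2⟩, hfx⟩
    have h₂ := preimDist_le_preimDist hu hS hm1 hm.le
    rw [abs_of_pos (sub_pos.mpr hx.1)] at h₁
    linarith [hx.2]

lemma strictAntiOn_abs_iterate_sub (hu : IsUnimodal f c) (hs : SymmetricAbout f c)
    (hS : IsCuttingSeq f c S) (k : ℕ) :
    StrictAntiOn (fun x => |f^[S k] x - c|) (Icc c (c + preimDist f c (S k))) :=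
  strictAntiOn_abs_sub_of_eq (strictMonoOn_or_strictAntiOn_iterate_Icc hu hs hS k)
    (hu.c_add_preimDist_mem hs (hS.one_le k) (critPreimages_nonempty hu hS _)).2

lemma orbitDist_add_lt_orbitDist_add (hu : IsUnimodal f c) (hs : SymmetricAbout f c)
    (hS : IsCuttingSeq f c S) {k T T' : ℕ} (h : orbitDist f c T < orbitDist f c T')
    (h' : orbitDist f c T' ≤ preimDist f c (S k)) :
    orbitDist f c (S k + T') < orbitDist f c (S k + T) := by
  rw [hu.orbitDist_add hs (hS.one_le k), hu.orbitDist_add hs (hS.one_le k)]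
  exact strictAntiOn_abs_iterate_sub hu hs hS k (c_add_orbitDist_mem_Icc (h.le.trans h'))
    (c_add_orbitDist_mem_Icc h') (by linarith)

lemma orbitDist_add_le_orbitDist_add (hu : IsUnimodal f c) (hs : SymmetricAbout f c)
    (hS : IsCuttingSeq f c S) {k T T' : ℕ} (h : orbitDist f c T ≤ orbitDist f c T')
    (h' : orbitDist f c T' ≤ preimDist f c (S k)) :
    orbitDist f c (S k + T') ≤ orbitDist f c (S k + T) := by
  rw [hu.orbitDist_add hs (hS.one_le k), hu.orbitDist_add hs (hS.one_le k)]
  exact (strictAntiOn_abs_iterate_sub hu hs hS k).antitoneOn (c_add_orbitDist_mem_Icc (h.trans h'))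
    (c_add_orbitDist_mem_Icc h') (by linarith)

end IsCuttingSeq

namespace IsFibonacciMap

variable {f : ℝ → ℝ} {c : ℝ}

lemma orbitDist_pos (hf : IsFibonacciMap f c) {n : ℕ} (hn : 1 ≤ n) : 0 < orbitDist f c n := by
  obtain ⟨hu, -, hS⟩ := hf
  refine abs_pos.mpr (sub_ne_zero.mpr fun hfix => ?_)
  have h₁ := preimDist_le (⟨hu.c_mem_Icc, hfix⟩ : c ∈ critPreimages f c n)
  have h₂ := hS.preimDist_le_preimDist hu hn (fibS_strictMono.id_le n)
  have h₃ := hS.preimDist_pos n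
  rw [sub_self, abs_zero] at h₁
  linarith

/-- `f^[S (i+1)]` maps `c₋ₛ₍ᵢ₊₂₎` to a preimage of `c` of order `S (i+2) - S (i+1) = S i`,
which lies between `c` and `c_{S (i+1)}`. -/
lemma preimDist_lt_orbitDist_fibS_succ (hf : IsFibonacciMap f c) (i : ℕ) :
    preimDist f c (fibS i) < orbitDist f c (fibS (i + 1)) := by
  obtain ⟨hu, hs, hS⟩ := hf
  set x := c + preimDist f c (fibS (i + 2))
  have hx : x ∈ critPreimages f c (fibS (i + 2)) :=
    hu.c_add_preimDist_mem hs (hS.one_le _) (hS.critPreimages_nonempty hu _)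
  have hw : f^[fibS (i + 1)] x ∈ critPreimages f c (fibS i) := by
    refine ⟨hu.mapsTo_iterate _ hx.1, ?_⟩
    rw [← Function.iterate_add_apply, add_comm]
    exact hx.2
  have hcx : c < x := lt_add_of_pos_right c (hS.preimDist_pos _)
  have hxD : x ≤ c + preimDist f c (fibS (i + 1)) := by
    linarith [hS.preimDist_succ_lt (i + 1)]
  calc preimDist f c (fibS i) ≤ |f^[fibS (i + 1)] x - c| := preimDist_le hw
    _ < |f^[fibS (i + 1)] c - c| :=
      hS.strictAntiOn_abs_iterate_sub hu hs (i + 1) ⟨le_rfl, hcx.le.trans hxD⟩ ⟨hcx.le, hxD⟩ hcx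

/-- Otherwise `f^[S (i+2)]` would carry a point of `[c, c₋ₛ₍ᵢ₊₂₎)` onto `c₋ₛᵢ`, producing a preimage
of `c` of order `S i + S (i+2) < S (i+3)` closer to `c` than `c₋ₛ₍ᵢ₊₂₎`. -/
lemma orbitDist_fibS_add_two_lt (hf : IsFibonacciMap f c) (i : ℕ) :
    orbitDist f c (fibS (i + 2)) < preimDist f c (fibS i) := by
  obtain ⟨hu, hs, hS⟩ := hf
  by_contra! hle
  set D := preimDist f c (fibS (i + 2))
  have hz : c + D ∈ critPreimages f c (fibS (i + 2)) :=
    hu.c_add_preimDist_mem hs (hS.one_le (i + 2)) (hS.critPreimages_nonempty hu _)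
  have hsub : Icc c (c + D) ⊆ Icc 0 1 := Icc_subset_Icc hu.c_mem_Icc.1 hz.1.2
  have hcont : ContinuousOn (fun x => |f^[fibS (i + 2)] x - c|) (Icc c (c + D)) :=
    (((hu.continuousOn_iterate _).mono hsub).sub continuousOn_const).abs
  have hD_pos : 0 < D := hS.preimDist_pos _
  obtain ⟨x, hx, hgx⟩ := intermediate_value_Icc' (by linarith) hcont
    (⟨by simpa [hz.2] using preimDist_nonneg f c (fibS i), hle⟩ :
      preimDist f c (fibS i) ∈ Icc |f^[fibS (i + 2)] (c + D) - c| (orbitDist f c (fibS (i + 2))))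
  dsimp only at hgx
  have hxD : x < c + D := by
    refine lt_of_le_of_ne hx.2 fun hxe => ?_
    simp only [hxe, hz.2, sub_self, abs_zero] at hgx
    exact (hS.preimDist_pos i).ne hgx
  have hy : f^[fibS i + fibS (i + 2)] x = c := by
    rw [Function.iterate_add_apply, ← hu.iterate_c_add_abs_sub hs (hS.one_le i)
      (hu.mapsTo_iterate _ (hsub hx)), hgx]
    exact (hu.c_add_preimDist_mem hs (hS.one_le i) (hS.critPreimages_nonempty hu _)).2
  have hlt : preimDist f c (fibS i + fibS (i + 2)) < D := by
    refine (preimDist_le ⟨hsub hx, hy⟩).trans_lt ?_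
    rw [abs_of_nonneg (sub_nonneg.mpr hx.1)]
    linarith
  have hcut := hS.succ_le_of_preimDist_lt (by omega) ⟨x, hsub hx, hy⟩ hlt
  have hfib : fibS (i + 2 + 1) = fibS (i + 2) + fibS (i + 1) := rfl
  have := fibS_strictMono (Nat.lt_add_one i)
  omega

lemma orbitDist_fibS_lt_orbitDist_fibS (hf : IsFibonacciMap f c) {j j' : ℕ} (hj : 1 ≤ j)
    (hjj' : j < j') : orbitDist f c (fibS j') < orbitDist f c (fibS j) := by
  have hanti : StrictAnti fun i => orbitDist f c (fibS (i + 1)) := strictAnti_nat_of_succ_lt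
    fun i => (hf.orbitDist_fibS_add_two_lt i).trans (hf.preimDist_lt_orbitDist_fibS_succ i)
  obtain ⟨i, rfl⟩ := Nat.exists_eq_add_of_le' hj
  obtain ⟨i', rfl⟩ := Nat.exists_eq_add_of_le' (hj.trans hjj'.le)
  exact hanti (by omega)

lemma orbitDist_sum_lt_preimDist (hf : IsFibonacciMap f c) {k : ℕ} {l : List ℕ}
    (hl : l.Pairwise fun a b => a + 2 ≤ b) (hk : ∀ k' ∈ l, k + 2 ≤ k') :
    orbitDist f c (l.map fibS).sum < preimDist f c (fibS k) := by
  have ⟨hu, hs, hS⟩ := hf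
  induction l generalizing k with
  | nil => simpa [orbitDist] using hS.preimDist_pos k
  | cons k₂ t ih =>
    obtain ⟨hk₂t, ht⟩ := List.pairwise_cons.mp hl
    have hkk₂ := hk k₂ List.mem_cons_self
    obtain ⟨i, rfl⟩ : ∃ i, k₂ = i + 2 := ⟨k₂ - 2, by omega⟩
    rw [List.map_cons, List.sum_cons]
    calc orbitDist f c (fibS (i + 2) + (t.map fibS).sum)
        ≤ orbitDist f c (fibS (i + 2) + 0) := hS.orbitDist_add_le_orbitDist_add hu hs
          (by simp [orbitDist]) (ih ht hk₂t).le
      _ < preimDist f c (fibS i) := hf.orbitDist_fibS_add_two_lt i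
      _ ≤ preimDist f c (fibS k) := hS.strictAnti_preimDist.antitone (by omega)

lemma orbitDist_sum_add_fibS_order (hf : IsFibonacciMap f c) {l : List ℕ} {j j' : ℕ}
    (hl : l.Pairwise fun a b => a + 2 ≤ b) (hlj : ∀ k ∈ l, k + 2 ≤ j) (hj : 1 ≤ j)
    (hjj' : j < j') :
    (Odd l.length →
      orbitDist f c ((l.map fibS).sum + fibS j) < orbitDist f c ((l.map fibS).sum + fibS j') ∧
      orbitDist f c ((l.map fibS).sum + fibS j') < orbitDist f c (l.map fibS).sum) ∧
    (Even l.length →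
      orbitDist f c (l.map fibS).sum < orbitDist f c ((l.map fibS).sum + fibS j') ∧
      orbitDist f c ((l.map fibS).sum + fibS j') < orbitDist f c ((l.map fibS).sum + fibS j)) := by
  have ⟨hu, hs, hS⟩ := hf
  induction l with
  | nil =>
    have h₀ : orbitDist f c 0 = 0 := by simp [orbitDist]
    simpa [h₀] using
      ⟨hf.orbitDist_pos (fibS_pos j'), hf.orbitDist_fibS_lt_orbitDist_fibS hj hjj'⟩
  | cons k l ih =>
    obtain ⟨hkl, hl⟩ := List.pairwise_cons.mp hl
    obtain ⟨ihOdd, ihEven⟩ := ih hl fun k' hk' => hlj k' (List.mem_cons_of_mem k hk')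
    have hbound : ∀ m, j ≤ m →
        orbitDist f c ((l.map fibS).sum + fibS m) ≤ preimDist f c (fibS k) := by
      intro m hm
      have hkj := hlj k List.mem_cons_self
      simpa using (hf.orbitDist_sum_lt_preimDist (l := l ++ [m])
        (List.pairwise_append.mpr ⟨hl, List.pairwise_singleton _ _, by grind⟩) (by grind)).le
    have hbound₀ := (hf.orbitDist_sum_lt_preimDist hl hkl).le
    simp only [List.map_cons, List.sum_cons, List.length_cons, Nat.odd_add_one, Nat.even_add_one,
      Nat.not_odd_iff_even, Nat.not_even_iff_odd, add_assoc]
    refine ⟨fun he => ?_, fun ho => ?_⟩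
    · obtain ⟨h₁, h₂⟩ := ihEven he
      exact ⟨hS.orbitDist_add_lt_orbitDist_add hu hs h₂ (hbound j le_rfl),
        hS.orbitDist_add_lt_orbitDist_add hu hs h₁ (hbound j' hjj'.le)⟩
    · obtain ⟨h₁, h₂⟩ := ihOdd ho
      exact ⟨hS.orbitDist_add_lt_orbitDist_add hu hs h₂ hbound₀,
        hS.orbitDist_add_lt_orbitDist_add hu hs h₁ (hbound j' hjj'.le)⟩

end IsFibonacciMap

/-- For a Fibonacci map, if `S = S_{k₁} + ⋯ + S_{k_{i₀}}` is a Fibonacci sum expression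
and `k_{i₀} + 2 ≤ j < j'`, then `|c_{S+S_j}| < |c_{S+S_{j'}}| < |c_S|` when `i₀` is odd,
and the inequalities are reversed when `i₀` is even. -/
theorem fibonacci_orbit_ordering_same_leading_block (f : ℝ → ℝ) (c : ℝ)
    (hf : IsFibonacciMap f c) (S kl j j' : ℕ) (l : List ℕ)
    (hl : IsFibExpansion l S) (hlast : l.getLast? = some kl)
    (hj : kl + 2 ≤ j) (hjj' : j < j') :
    (Odd l.length →
      |f^[S + fibS j] c - c| < |f^[S + fibS j'] c - c| ∧
      |f^[S + fibS j'] c - c| < |f^[S] c - c|) ∧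
    (Even l.length →
      |f^[S] c - c| < |f^[S + fibS j'] c - c| ∧
      |f^[S + fibS j'] c - c| < |f^[S + fibS j] c - c|) := by
  obtain ⟨-, hchain, rfl⟩ := hl
  have : Trans (fun a b : ℕ => a + 2 ≤ b) (fun a b => a + 2 ≤ b) (fun a b => a + 2 ≤ b) :=
    ⟨fun hab hbc => by omega⟩
  have hchain' : (l ++ [j]).IsChain fun a b => a + 2 ≤ b :=
    List.isChain_append.mpr ⟨hchain, List.isChain_singleton j, by simpa [hlast]⟩
  obtain ⟨hpw, -, hlj⟩ := List.pairwise_append.mp (List.isChain_iff_pairwise.mp hchain')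
  exact hf.orbitDist_sum_add_fibS_order hpw (fun k hk => hlj k hk j (List.mem_singleton_self j))
    (by omega) hjj'
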